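/- Let N ≥ 1 be squarefree and d a positive divisor of N. Choose α, β, γ, δ ∈ ℤ with αδd − βγN/d = 1, set V_d := (1/√d)·[[αd, βN],[γ, δd]] and F_d := [[V_d^{−1}, 0],[0, V_dᵗ]] ∈ Sp₄(ℝ) (2×2 blocks). Then F_d² ∈ Σ_N, F_d·Σ_N·F_d^{−1} = Σ_N, and F_d·Σ_{N,∞}·F_d^{−1} = Σ_{N,∞}. -/

import Mathlib

open scoped Classical
open Complex Matrix Finset

noncomputable section

/-- The Siegel upper half-space of degree 2, in coordinates `(τ, z, τ′)`. -/
def H2 : Set (ℂ × ℂ × ℂ) :=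
  {w | 0 < w.1.im ∧ 0 < w.2.2.im ∧ w.2.1.im ^ 2 < w.1.im * w.2.2.im}

/-- The symmetric 2×2 matrix `[[τ, z],[z, τ′]]` attached to `(τ, z, τ′)`. -/
def matOf (w : ℂ × ℂ × ℂ) : Matrix (Fin 2) (Fin 2) ℂ :=
  !![w.1, w.2.1; w.2.1, w.2.2]

/-- The triple `(Z 0 0, Z 0 1, Z 1 1)` attached to a symmetric 2×2 matrix. -/
def tripleOf (Z : Matrix (Fin 2) (Fin 2) ℂ) : ℂ × ℂ × ℂ :=
  (Z 0 0, Z 0 1, Z 1 1)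

/-- The 2×2 block at block-position `(a, b)` of a 4×4 real matrix. -/
def blk (M : Matrix (Fin 4) (Fin 4) ℝ) (a b : Fin 2) : Matrix (Fin 2) (Fin 2) ℝ :=
  Matrix.of fun i j => M ⟨2 * a.1 + i.1, by omega⟩ ⟨2 * b.1 + j.1, by omega⟩

def J4 : Matrix (Fin 4) (Fin 4) ℝ := !![0,0,-1,0; 0,0,0,-1; 1,0,0,0; 0,1,0,0]

/-- Membership in `Sp₄(ℝ)`. -/
def IsSymplectic (M : Matrix (Fin 4) (Fin 4) ℝ) : Prop := Mᵀ * J4 * M = J4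

def ZIntegral (x : ℝ) : Prop := ∃ n : ℤ, x = n

/-- The paramodular group `Σ_N` of degree 2 and level `N`, realized in `Sp₄(ℝ)`. -/
def ParamodularGroup (N : ℤ) : Set (Matrix (Fin 4) (Fin 4) ℝ) :=
  {M | IsSymplectic M ∧
    (∀ i j : Fin 4, (i, j) ≠ ((1 : Fin 4), (3 : Fin 4)) → ZIntegral (M i j)) ∧
    (∃ n : ℤ, M 1 3 = n / N) ∧
    (∃ n : ℤ, M 0 1 = N * n) ∧ (∃ n : ℤ, M 2 1 = N * n) ∧
    (∃ n : ℤ, M 3 0 = N * n) ∧ (∃ n : ℤ, M 3 1 = N * n) ∧ (∃ n : ℤ, M 3 2 = N * n)}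

/-- The Jacobi subgroup `Σ_N^J` of the paramodular group. -/
def JacobiGroup (N : ℤ) : Set (Matrix (Fin 4) (Fin 4) ℝ) :=
  {M | M ∈ ParamodularGroup N ∧
    (M 1 1 = 1 ∨ M 1 1 = -1) ∧ M 0 1 = 0 ∧ M 2 1 = 0 ∧ M 3 1 = 0 ∧
    (M 3 3 = 1 ∨ M 3 3 = -1) ∧ M 3 0 = 0 ∧ M 3 2 = 0}

/-- The translation subgroup `Γ_N` of the Jacobi group. -/
def TransGroup (N : ℤ) : Set (Matrix (Fin 4) (Fin 4) ℝ) :=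
  {M | M ∈ ParamodularGroup N ∧ blk M 0 0 = 1 ∧ blk M 1 0 = 0 ∧ blk M 1 1 = 1}

/-- The subgroup `Σ_{N,∞}` of the paramodular group (vanishing lower-left block). -/
def ParamodularInfinity (N : ℤ) : Set (Matrix (Fin 4) (Fin 4) ℝ) :=
  {M | M ∈ ParamodularGroup N ∧ blk M 1 0 = 0}

/-- The Petersson slash action `(f |_k M)(Z) = det(CZ+D)^{-k} f((AZ+B)(CZ+D)⁻¹)`. -/
def slash (k : ℤ) (M : Matrix (Fin 4) (Fin 4) ℝ) (f : ℂ × ℂ × ℂ → ℂ)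
    (w : ℂ × ℂ × ℂ) : ℂ :=
  ((blk M 1 0).map Complex.ofReal * matOf w + (blk M 1 1).map Complex.ofReal).det ^ (-k) *
    f (tripleOf (((blk M 0 0).map Complex.ofReal * matOf w + (blk M 0 1).map Complex.ofReal) *
      ((blk M 1 0).map Complex.ofReal * matOf w + (blk M 1 1).map Complex.ofReal)⁻¹))

/-- One term of the Fourier expansion of level `N`. -/
def fourierTerm (N : ℤ) (a : ℤ → ℤ → ℤ → ℂ) (w : ℂ × ℂ × ℂ) (t : ℤ × ℤ × ℤ) : ℂ :=
  a t.1 t.2.1 t.2.2 * Complex.exp (2 * Real.pi * Complex.I *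
    ((t.1 : ℂ) * w.1 + (t.2.1 : ℂ) * w.2.1 + (t.2.2 : ℂ) * (N : ℂ) * w.2.2))

/-- `f` has Fourier coefficients `a` for level `N`. -/
def HasFourierCoeffs (N : ℤ) (f : ℂ × ℂ × ℂ → ℂ) (a : ℤ → ℤ → ℤ → ℂ) : Prop :=
  (∀ n r m : ℤ, ¬(0 ≤ n ∧ 0 ≤ m ∧ r ^ 2 ≤ 4 * n * m * N) → a n r m = 0) ∧
  ∀ w ∈ H2, Summable (fun t : ℤ × ℤ × ℤ => ‖fourierTerm N a w t‖) ∧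
    HasSum (fourierTerm N a w) (f w)

/-- The divisor power sum `σ_{k-1}(t) = ∑_{δ ∣ t} δ^{k-1}`. -/
def sigmaz (k : ℤ) (t : ℕ) : ℂ := ∑ δ ∈ t.divisors, (δ : ℂ) ^ (k - 1)

/-- The nonnegative gcd of three integers. -/
def gcd3 (n r m : ℤ) : ℕ := Int.gcd (Int.gcd n r) m

/-- The Maaß relations of weight `k` for a coefficient function. -/
def MaassRelations (k : ℤ) (a : ℤ → ℤ → ℤ → ℂ) : Prop :=
  ∀ n r m : ℤ, ¬(n = 0 ∧ r = 0 ∧ m = 0) →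
    a n r m = ∑ δ ∈ (gcd3 n r m).divisors,
      (δ : ℂ) ^ (k - 1) * a (n * m / (δ : ℤ) ^ 2) (r / (δ : ℤ)) 1

/-- The operator `T_p^↑`. -/
def Tup (k : ℤ) (p : ℕ) (f : ℂ × ℂ × ℂ → ℂ) (w : ℂ × ℂ × ℂ) : ℂ :=
  (((p : ℝ) ^ ((k : ℝ) / 2) : ℝ) : ℂ) * f ((p : ℂ) * w.1, (Real.sqrt p : ℂ) * w.2.1, w.2.2) +
  (((p : ℝ) ^ (-(k : ℝ) / 2) : ℝ) : ℂ) *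
    ∑ u ∈ Finset.range p, f ((w.1 + (u : ℂ)) / (p : ℂ), w.2.1 / (Real.sqrt p : ℂ), w.2.2)

/-- The operator `T_p^↓`. -/
def Tdown (N k : ℤ) (p : ℕ) (f : ℂ × ℂ × ℂ → ℂ) (w : ℂ × ℂ × ℂ) : ℂ :=
  (((p : ℝ) ^ ((k : ℝ) / 2) : ℝ) : ℂ) * f (w.1, (Real.sqrt p : ℂ) * w.2.1, (p : ℂ) * w.2.2) +
  (((p : ℝ) ^ (-(k : ℝ) / 2) : ℝ) : ℂ) *
    ∑ u ∈ Finset.range p,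
      f (w.1, w.2.1 / (Real.sqrt p : ℂ), (w.2.2 + (u : ℂ) / (N : ℂ)) / (p : ℂ))

/-- Condition (ii) of Lemma 1 on the Fourier coefficients. -/
def HeckeCondition (k : ℤ) (p : ℕ) (a : ℤ → ℤ → ℤ → ℂ) : Prop :=
  ∀ n r m : ℤ,
    a n r (p * m) + (p : ℂ) ^ (k - 1) *
      (if (p : ℤ) ∣ r ∧ (p : ℤ) ∣ m then a n (r / p) (m / p) else 0)
    = a (p * n) r m + (p : ℂ) ^ (k - 1) *
      (if (p : ℤ) ∣ n ∧ (p : ℤ) ∣ r then a (n / p) (r / p) m else 0)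

end

/-! Write `N = d * e`. Up to the factor `1/√d`, `F_d` is an integer matrix `A`, and `F_d⁻¹` is the
Fricke element of the adjugate quadruple `(δ, -β, -γ, α)`. For any two Fricke elements `F = A/√d`,
`F' = A'/√d` of level `N` and any `M ∈ Σ_N`, the product `F M F' = A M A' / d` is symplectic, and
expanding its entries shows that it has the integrality pattern of `Σ_N`: after `N = d * e` every
term of `A M A'` carries a factor `d`. The pairs `(F_d, F_d⁻¹)`, `(F_d⁻¹, F_d)` and `(F_d, F_d)`
(with `M = 1`) give the normalization and `F_d² ∈ Σ_N`; since `F_d` is block diagonal, conjugation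
also keeps the lower-left block zero. -/

theorem IsSymplectic.mul {P Q : Matrix (Fin 4) (Fin 4) ℝ} (hP : IsSymplectic P)
    (hQ : IsSymplectic Q) : IsSymplectic (P * Q) := by
  unfold IsSymplectic at *
  calc (P * Q)ᵀ * J4 * (P * Q) = Qᵀ * (Pᵀ * J4 * P) * Q := by
        simp only [Matrix.transpose_mul, Matrix.mul_assoc]
    _ = J4 := by rw [hP, hQ]

theorem blk_one_zero_eq_zero_iff (P : Matrix (Fin 4) (Fin 4) ℝ) :
    blk P 1 0 = 0 ↔ P 2 0 = 0 ∧ P 2 1 = 0 ∧ P 3 0 = 0 ∧ P 3 1 = 0 := by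
  refine ⟨fun h => ⟨congrFun₂ h 0 0, congrFun₂ h 0 1, congrFun₂ h 1 0, congrFun₂ h 1 1⟩, ?_⟩
  rintro ⟨h20, h21, h30, h31⟩
  ext i j
  fin_cases i <;> fin_cases j <;> assumption

theorem blk_mul_one_zero {P Q : Matrix (Fin 4) (Fin 4) ℝ} (hP : blk P 1 0 = 0)
    (hQ : blk Q 1 0 = 0) : blk (P * Q) 1 0 = 0 := by
  rw [blk_one_zero_eq_zero_iff] at *
  simp [Matrix.mul_apply, Fin.sum_univ_four, hP, hQ]

theorem Set.image_mul_mul_eq_self {G : Type*} [Monoid G] {a b : G} (hab : a * b = 1) {S : Set G}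
    (ha : ∀ x ∈ S, a * x * b ∈ S) (hb : ∀ x ∈ S, b * x * a ∈ S) :
    (fun x => a * x * b) '' S = S := by
  refine subset_antisymm (Set.image_subset_iff.2 ha) fun x hx => ⟨b * x * a, hb x hx, ?_⟩
  simp only [← mul_assoc, hab, one_mul]
  rw [mul_assoc, hab, mul_one]

noncomputable def paramodularLift (N : ℤ) (m : Matrix (Fin 4) (Fin 4) ℤ) :
    Matrix (Fin 4) (Fin 4) ℝ :=
  !![m 0 0, N * m 0 1, m 0 2, m 0 3;
     m 1 0, m 1 1, m 1 2, m 1 3 / N;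
     m 2 0, N * m 2 1, m 2 2, m 2 3;
     N * m 3 0, N * m 3 1, N * m 3 2, m 3 3]

theorem mem_paramodularGroup_iff (N : ℤ) (M : Matrix (Fin 4) (Fin 4) ℝ) :
    M ∈ ParamodularGroup N ↔ IsSymplectic M ∧ ∃ m, paramodularLift N m = M := by
  constructor
  · rintro ⟨hM, hint, ⟨m13, h13⟩, ⟨m01, h01⟩, ⟨m21, h21⟩, ⟨m30, h30⟩, ⟨m31, h31⟩, ⟨m32, h32⟩⟩
    choose m hm using hint
    refine ⟨hM, !![m 0 0 (by decide), m01, m 0 2 (by decide), m 0 3 (by decide);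
      m 1 0 (by decide), m 1 1 (by decide), m 1 2 (by decide), m13;
      m 2 0 (by decide), m21, m 2 2 (by decide), m 2 3 (by decide);
      m30, m31, m32, m 3 3 (by decide)], ?_⟩
    ext i j
    fin_cases i <;> fin_cases j <;> simp [paramodularLift, *]
  · rintro ⟨hM, m, rfl⟩
    refine ⟨hM, ?_, ⟨_, rfl⟩, ⟨_, rfl⟩, ⟨_, rfl⟩, ⟨_, rfl⟩, ⟨_, rfl⟩, ⟨_, rfl⟩⟩
    intro i j hij
    fin_cases i <;> fin_cases j <;>
      first | exact absurd rfl hij | exact ⟨_, rfl⟩ | exact ⟨_, (Int.cast_mul _ _).symm⟩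

theorem one_mem_paramodularGroup (N : ℤ) : 1 ∈ ParamodularGroup N := by
  refine (mem_paramodularGroup_iff N 1).2 ⟨by simp [IsSymplectic], 1, ?_⟩
  ext i j
  fin_cases i <;> fin_cases j <;> simp [paramodularLift]

/-- `√d • F_d` for `N = d * e`: its diagonal blocks are `√d • V_d⁻¹` and `√d • V_dᵗ`. -/
def frickeNumerator (d e α β γ δ : ℤ) : Matrix (Fin 4) (Fin 4) ℤ :=
  !![δ * d, -(β * (d * e)), 0, 0;
     -γ, α * d, 0, 0;
     0, 0, α * d, γ;
     0, 0, β * (d * e), δ * d]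

noncomputable def frickeMatrix (d e α β γ δ : ℤ) : Matrix (Fin 4) (Fin 4) ℝ :=
  (√(d : ℝ))⁻¹ • (frickeNumerator d e α β γ δ).map (Int.castRingHom ℝ)

def frickeSandwich (d e α β γ δ α' β' γ' δ' : ℤ) (m : Matrix (Fin 4) (Fin 4) ℤ) :
    Matrix (Fin 4) (Fin 4) ℤ :=
  !![δ*δ'*d*m 0 0 - δ*γ'*d*e*m 0 1 - β*δ'*d*e*m 1 0 + β*γ'*e*m 1 1,
     -δ*β'*m 0 0 + δ*α'*d*m 0 1 + β*β'*e*m 1 0 - β*α'*m 1 1,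
     δ*α'*d*m 0 2 + δ*β'*d*e*m 0 3 - β*α'*d*e*m 1 2 - β*β'*e*m 1 3,
     δ*γ'*m 0 2 + δ*δ'*d*m 0 3 - β*γ'*e*m 1 2 - β*δ'*m 1 3;
     -γ*δ'*m 0 0 + γ*γ'*e*m 0 1 + α*δ'*d*m 1 0 - α*γ'*m 1 1,
     γ*β'*e*m 0 0 - γ*α'*d*e*m 0 1 - α*β'*d*e*m 1 0 + α*α'*d*m 1 1,
     -γ*α'*m 0 2 - γ*β'*e*m 0 3 + α*α'*d*m 1 2 + α*β'*m 1 3,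
     -γ*γ'*e*m 0 2 - γ*δ'*d*e*m 0 3 + α*γ'*d*e*m 1 2 + α*δ'*d*m 1 3;
     α*δ'*d*m 2 0 - α*γ'*d*e*m 2 1 + γ*δ'*d*e*m 3 0 - γ*γ'*e*m 3 1,
     -α*β'*m 2 0 + α*α'*d*m 2 1 - γ*β'*e*m 3 0 + γ*α'*m 3 1,
     α*α'*d*m 2 2 + α*β'*d*e*m 2 3 + γ*α'*d*e*m 3 2 + γ*β'*e*m 3 3,
     α*γ'*m 2 2 + α*δ'*d*m 2 3 + γ*γ'*e*m 3 2 + γ*δ'*m 3 3;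
     β*δ'*m 2 0 - β*γ'*e*m 2 1 + δ*δ'*d*m 3 0 - δ*γ'*m 3 1,
     -β*β'*e*m 2 0 + β*α'*d*e*m 2 1 - δ*β'*d*e*m 3 0 + δ*α'*d*m 3 1,
     β*α'*m 2 2 + β*β'*e*m 2 3 + δ*α'*d*m 3 2 + δ*β'*m 3 3,
     β*γ'*e*m 2 2 + β*δ'*d*e*m 2 3 + δ*γ'*d*e*m 3 2 + δ*δ'*d*m 3 3]

section Fricke

variable {d e : ℤ}

theorem inv_atkinLehner (hd : 0 < d) {α β γ δ : ℤ} (hdet : α * δ * d - β * γ * e = 1) :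
    ((√(d : ℝ))⁻¹ •
        !![((α * d : ℤ) : ℝ), ((β * (d * e) : ℤ) : ℝ); ((γ : ℤ) : ℝ), ((δ * d : ℤ) : ℝ)])⁻¹ =
      (√(d : ℝ))⁻¹ •
        !![((δ * d : ℤ) : ℝ), -((β * (d * e) : ℤ) : ℝ); -((γ : ℤ) : ℝ), ((α * d : ℤ) : ℝ)] := by
  have hdet' : (α * δ * d - β * γ * e : ℝ) = 1 := by exact_mod_cast hdet
  apply Matrix.inv_eq_right_inv
  have key : !![((α * d : ℤ) : ℝ), ((β * (d * e) : ℤ) : ℝ); ((γ : ℤ) : ℝ), ((δ * d : ℤ) : ℝ)] *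
      !![((δ * d : ℤ) : ℝ), -((β * (d * e) : ℤ) : ℝ); -((γ : ℤ) : ℝ), ((α * d : ℤ) : ℝ)] =
      (d : ℝ) • 1 := by
    ext i j
    fin_cases i <;> fin_cases j <;> simp <;>
      first | ring1 | linear_combination (d : ℝ) * hdet'
  rw [Matrix.smul_mul, Matrix.mul_smul, smul_smul, ← mul_inv, Real.mul_self_sqrt (by positivity),
    key, smul_smul, inv_mul_cancel₀ (by positivity), one_smul]

theorem frickeMatrix_mul_mul_frickeMatrix (hd : 0 < d) (α β γ δ α' β' γ' δ' : ℤ)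
    (X : Matrix (Fin 4) (Fin 4) ℝ) :
    frickeMatrix d e α β γ δ * X * frickeMatrix d e α' β' γ' δ' =
      (d : ℝ)⁻¹ • ((frickeNumerator d e α β γ δ).map (Int.castRingHom ℝ) * X *
        (frickeNumerator d e α' β' γ' δ').map (Int.castRingHom ℝ)) := by
  rw [frickeMatrix, frickeMatrix, Matrix.smul_mul, Matrix.smul_mul, Matrix.mul_smul, smul_smul,
    ← mul_inv, Real.mul_self_sqrt (by positivity)]

theorem frickeNumerator_mul_frickeNumerator_adj {α β γ δ : ℤ}
    (hdet : α * δ * d - β * γ * e = 1) :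
    frickeNumerator d e α β γ δ * frickeNumerator d e δ (-β) (-γ) α = d • 1 := by
  ext i j
  fin_cases i <;> fin_cases j <;>
    simp [frickeNumerator, Matrix.mul_apply, Fin.sum_univ_four] <;>
    first | ring1 | linear_combination d * hdet

theorem frickeMatrix_mul_frickeMatrix_adj (hd : 0 < d) {α β γ δ : ℤ}
    (hdet : α * δ * d - β * γ * e = 1) :
    frickeMatrix d e α β γ δ * frickeMatrix d e δ (-β) (-γ) α = 1 := by
  rw [← Matrix.mul_one (frickeMatrix d e α β γ δ), frickeMatrix_mul_mul_frickeMatrix hd,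
    Matrix.mul_one, ← Matrix.map_mul, frickeNumerator_mul_frickeNumerator_adj hdet]
  ext i j
  simp only [Matrix.map_apply, Matrix.smul_apply, Matrix.one_apply, smul_eq_mul]
  split_ifs <;> simp [hd.ne']

theorem isSymplectic_frickeMatrix (hd : 0 < d) {α β γ δ : ℤ}
    (hdet : α * δ * d - β * γ * e = 1) : IsSymplectic (frickeMatrix d e α β γ δ) := by
  have hdet' : (α * δ * d - β * γ * e : ℝ) = 1 := by exact_mod_cast hdet
  have key : ((frickeNumerator d e α β γ δ).map (Int.castRingHom ℝ))ᵀ * J4 *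
      (frickeNumerator d e α β γ δ).map (Int.castRingHom ℝ) = (d : ℝ) • J4 := by
    ext i j
    fin_cases i <;> fin_cases j <;>
      simp [frickeNumerator, J4, Matrix.mul_apply, Fin.sum_univ_four] <;>
      first | ring1 | linear_combination (d : ℝ) * hdet' | linear_combination -(d : ℝ) * hdet'
  rw [IsSymplectic, frickeMatrix, Matrix.transpose_smul, Matrix.smul_mul, Matrix.smul_mul,
    Matrix.mul_smul, smul_smul, ← mul_inv, Real.mul_self_sqrt (by positivity), key, smul_smul,
    inv_mul_cancel₀ (by positivity), one_smul]

theorem frickeMatrix_mul_paramodularLift_mul_frickeMatrix (hd : 0 < d) (he : e ≠ 0)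
    (α β γ δ α' β' γ' δ' : ℤ) (m : Matrix (Fin 4) (Fin 4) ℤ) :
    frickeMatrix d e α β γ δ * paramodularLift (d * e) m * frickeMatrix d e α' β' γ' δ' =
      paramodularLift (d * e) (frickeSandwich d e α β γ δ α' β' γ' δ' m) := by
  have hd' : (d : ℝ) ≠ 0 := by positivity
  have he' : (e : ℝ) ≠ 0 := by exact_mod_cast he
  rw [frickeMatrix_mul_mul_frickeMatrix hd]
  ext i j
  fin_cases i <;> fin_cases j <;>
    simp [paramodularLift, frickeSandwich, frickeNumerator, Matrix.mul_apply,
      Fin.sum_univ_four] <;>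
    field_simp <;> ring

variable {α β γ δ α' β' γ' δ' : ℤ}

theorem frickeMatrix_mul_mul_frickeMatrix_mem_paramodularGroup (hd : 0 < d) (he : e ≠ 0)
    (hdet : α * δ * d - β * γ * e = 1) (hdet' : α' * δ' * d - β' * γ' * e = 1)
    {M : Matrix (Fin 4) (Fin 4) ℝ} (hM : M ∈ ParamodularGroup (d * e)) :
    frickeMatrix d e α β γ δ * M * frickeMatrix d e α' β' γ' δ' ∈ ParamodularGroup (d * e) := by
  obtain ⟨hMs, m, rfl⟩ := (mem_paramodularGroup_iff _ M).1 hM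
  exact (mem_paramodularGroup_iff _ _).2
    ⟨IsSymplectic.mul (IsSymplectic.mul (isSymplectic_frickeMatrix hd hdet) hMs)
      (isSymplectic_frickeMatrix hd hdet'), _,
      (frickeMatrix_mul_paramodularLift_mul_frickeMatrix hd he ..).symm⟩

theorem blk_frickeMatrix_one_zero : blk (frickeMatrix d e α β γ δ) 1 0 = 0 :=
  (blk_one_zero_eq_zero_iff _).2 (by simp [frickeMatrix, frickeNumerator])

theorem frickeMatrix_mul_mul_frickeMatrix_mem_paramodularInfinity (hd : 0 < d) (he : e ≠ 0)
    (hdet : α * δ * d - β * γ * e = 1) (hdet' : α' * δ' * d - β' * γ' * e = 1)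
    {M : Matrix (Fin 4) (Fin 4) ℝ} (hM : M ∈ ParamodularInfinity (d * e)) :
    frickeMatrix d e α β γ δ * M * frickeMatrix d e α' β' γ' δ' ∈
      ParamodularInfinity (d * e) :=
  ⟨frickeMatrix_mul_mul_frickeMatrix_mem_paramodularGroup hd he hdet hdet' hM.1,
    blk_mul_one_zero (blk_mul_one_zero blk_frickeMatrix_one_zero hM.2) blk_frickeMatrix_one_zero⟩

end Fricke

theorem Fd_normalizes_general (N : ℤ) (hN : 1 ≤ N)
    (d : ℤ) (hd : 0 < d) (hdN : d ∣ N) (α β γ δ : ℤ)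
    (hdet : α * δ * d - β * γ * (N / d) = 1) :
    let Vd : Matrix (Fin 2) (Fin 2) ℝ :=
      (Real.sqrt d)⁻¹ •
        !![((α * d : ℤ) : ℝ), ((β * N : ℤ) : ℝ); ((γ : ℤ) : ℝ), ((δ * d : ℤ) : ℝ)]
    let Fd : Matrix (Fin 4) (Fin 4) ℝ :=
      !![Vd⁻¹ 0 0, Vd⁻¹ 0 1, 0, 0;
         Vd⁻¹ 1 0, Vd⁻¹ 1 1, 0, 0;
         0, 0, Vdᵀ 0 0, Vdᵀ 0 1;
         0, 0, Vdᵀ 1 0, Vdᵀ 1 1]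
    Fd * Fd ∈ ParamodularGroup N ∧
    (fun X => Fd * X * Fd⁻¹) '' ParamodularGroup N = ParamodularGroup N ∧
    (fun X => Fd * X * Fd⁻¹) '' ParamodularInfinity N = ParamodularInfinity N := by
  intro Vd Fd
  obtain ⟨e, rfl⟩ := hdN
  have he : e ≠ 0 := by rintro rfl; simp at hN
  rw [Int.mul_ediv_cancel_left _ hd.ne'] at hdet
  have hdet_adj : δ * α * d - -β * -γ * e = 1 := by linear_combination hdet
  have hFd : Fd = frickeMatrix d e α β γ δ := by
    have hV : Vd⁻¹ = _ := inv_atkinLehner hd hdet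
    ext i j
    fin_cases i <;> fin_cases j <;> simp only [Fd, hV] <;> simp [Vd, frickeMatrix, frickeNumerator]
  have hF_adj := frickeMatrix_mul_frickeMatrix_adj hd hdet
  rw [hFd, Matrix.inv_eq_right_inv hF_adj]
  refine ⟨?_, Set.image_mul_mul_eq_self hF_adj ?_ ?_, Set.image_mul_mul_eq_self hF_adj ?_ ?_⟩
  · simpa only [Matrix.mul_one] using frickeMatrix_mul_mul_frickeMatrix_mem_paramodularGroup
      hd he hdet hdet (one_mem_paramodularGroup _)
  · exact fun M => frickeMatrix_mul_mul_frickeMatrix_mem_paramodularGroup hd he hdet hdet_adj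
  · exact fun M => frickeMatrix_mul_mul_frickeMatrix_mem_paramodularGroup hd he hdet_adj hdet
  · exact fun M => frickeMatrix_mul_mul_frickeMatrix_mem_paramodularInfinity hd he hdet hdet_adj
  · exact fun M => frickeMatrix_mul_mul_frickeMatrix_mem_paramodularInfinity hd he hdet_adj hdet

/-- Section 3: the Fricke-type element `F_d` squares into `Σ_N` and normalizes both
`Σ_N` and `Σ_{N,∞}`. -/
theorem Fd_normalizes (N : ℤ) (hN : 1 ≤ N) (hsf : Squarefree N)
    (d : ℤ) (hd : 0 < d) (hdN : d ∣ N) (α β γ δ : ℤ)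
    (hdet : α * δ * d - β * γ * (N / d) = 1) :
    let Vd : Matrix (Fin 2) (Fin 2) ℝ :=
      (Real.sqrt d)⁻¹ •
        !![((α * d : ℤ) : ℝ), ((β * N : ℤ) : ℝ); ((γ : ℤ) : ℝ), ((δ * d : ℤ) : ℝ)]
    let Fd : Matrix (Fin 4) (Fin 4) ℝ :=
      !![Vd⁻¹ 0 0, Vd⁻¹ 0 1, 0, 0;
         Vd⁻¹ 1 0, Vd⁻¹ 1 1, 0, 0;
         0, 0, Vdᵀ 0 0, Vdᵀ 0 1;
         0, 0, Vdᵀ 1 0, Vdᵀ 1 1]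
    Fd * Fd ∈ ParamodularGroup N ∧
    (fun X => Fd * X * Fd⁻¹) '' ParamodularGroup N = ParamodularGroup N ∧
    (fun X => Fd * X * Fd⁻¹) '' ParamodularInfinity N = ParamodularInfinity N :=
  Fd_normalizes_general N hN d hd hdN α β γ δ hdet
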